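/- arXiv:1307.1169 — 5 statements merged into one kernel-verified Lean document; each statement's English description precedes it below -/
import Mathlib

section
/- Every cylindrical semi-bar k-visibility graph with injective lengths has chromatic number at most 2k+3. -/
open Finset
open scoped Classical

variable {n : ℕ}

/-- The open cyclic arc from `i` to `j` (going in the positive direction), excluding both. -/
def Arc [NeZero n] (i j : ZMod n) : Finset (ZMod n) :=
  univ.filter fun t => 0 < (t - i).val ∧ (t - i).val < (j - i).val

/-- Number of bars on the open arc from `i` to `j` strictly longer than the shorter of `i, j`. -/
noncomputable def exceedCount [NeZero n] (ℓ : ZMod n → ℝ) (i j : ZMod n) : ℕ :=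
  ((Arc i j).filter fun t => min (ℓ i) (ℓ j) < ℓ t).card

/-- The cylindrical semi-bar `k`-visibility graph: `i ≠ j` are adjacent iff on one of the two
open cyclic arcs between them at most `k` bars are longer than `min (ℓ i) (ℓ j)`. -/
noncomputable def CylGraph (k : ℕ) [NeZero n] (ℓ : ZMod n → ℝ) : SimpleGraph (ZMod n) where
  Adj i j := i ≠ j ∧ (exceedCount ℓ i j ≤ k ∨ exceedCount ℓ j i ≤ k)
  symm := ⟨fun i j h => ⟨h.1.symm, h.2.symm⟩⟩
  loopless := ⟨fun i h => h.1 rfl⟩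

noncomputable instance (k : ℕ) [NeZero n] (ℓ : ZMod n → ℝ) :
    DecidableRel (CylGraph k ℓ).Adj := Classical.decRel _

/-!
Colour the bars greedily in order of decreasing length; it suffices that every bar `v` has at most
`2k + 2` longer neighbours. Measure positions cyclically from `v`. A longer bar `u` adjacent to `v`
has at most `k` longer-than-`v` bars either before it (the arc from `v` to `u`) or after it (the
arc from `u` back to `v`), and in any linearly ordered finite set at most `k + 1` elements have at
most `k` elements below them, and likewise above.
-/

namespace SimpleGraph

variable {V α : Type*} [Fintype V] [LinearOrder α]

theorem colorable_of_card_higher_neighbors_le (G : SimpleGraph V) [DecidableRel G.Adj]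
    (f : V → α) (d : ℕ) (hf : ∀ u v, G.Adj u v → f u ≠ f v)
    (hdeg : ∀ v, #{u | G.Adj v u ∧ f v < f u} ≤ d) : G.Colorable (d + 1) := by
  suffices ∀ s : Finset V, ∃ c : V → Fin (d + 1), ∀ u ∈ s, ∀ v ∈ s, G.Adj u v → c u ≠ c v by
    obtain ⟨c, hc⟩ := this univ
    exact ⟨Coloring.mk c fun h => hc _ (mem_univ _) _ (mem_univ _) h⟩
  intro s
  induction s using Finset.induction_on_min_value f with
  | empty => exact ⟨fun _ => 0, by simp⟩
  | insert a s has hmin ih =>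
    obtain ⟨c, hc⟩ := ih
    have hused : #((s.filter (G.Adj a)).image c) < #(univ : Finset (Fin (d + 1))) := by
      calc #((s.filter (G.Adj a)).image c) ≤ #(s.filter (G.Adj a)) := card_image_le
        _ ≤ #{u | G.Adj a u ∧ f a < f u} := card_le_card fun u hu => by
            obtain ⟨hus, hau⟩ := mem_filter.mp hu
            exact mem_filter.mpr ⟨mem_univ _, hau, (hmin u hus).lt_of_ne (hf a u hau)⟩
        _ < #(univ : Finset (Fin (d + 1))) := by simpa using Nat.lt_succ_of_le (hdeg a)
    obtain ⟨col, -, hcol⟩ := exists_mem_notMem_of_card_lt_card hused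
    have hfree : ∀ v ∈ s, G.Adj a v → col ≠ c v := fun v hv hav h =>
      hcol (h ▸ mem_image_of_mem c (mem_filter.mpr ⟨hv, hav⟩))
    refine ⟨Function.update c a col, ?_⟩
    have hne : ∀ v ∈ s, v ≠ a := fun v hv h => has (h ▸ hv)
    rintro u hu v hv huv
    rcases mem_insert.mp hu with rfl | hus <;> rcases mem_insert.mp hv with rfl | hvs
    · exact absurd huv G.irrefl
    · simpa [hne v hvs] using hfree v hvs huv
    · simpa [hne u hus] using (hfree u hus huv.symm).symm
    · simpa [hne u hus, hne v hvs] using hc u hus v hvs huv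

end SimpleGraph

section CountBelow

variable {β α : Type*} [LinearOrder α]

theorem card_filter_card_lt_le (s : Finset β) {p : β → α} (hp : Set.InjOn p s) (k : ℕ) :
    #{x ∈ s | #{y ∈ s | p y < p x} ≤ k} ≤ k + 1 := by
  have hmono : ∀ x ∈ s, ∀ x' ∈ s, p x < p x' →
      #{y ∈ s | p y < p x} < #{y ∈ s | p y < p x'} := fun x hx x' hx' hxx' =>
    card_lt_card <| (ssubset_iff_of_subset fun y hy => by
      simp only [mem_filter] at hy ⊢
      exact ⟨hy.1, hy.2.trans hxx'⟩).mpr ⟨x, by simp [hx, hxx'], by simp⟩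
  calc #{x ∈ s | #{y ∈ s | p y < p x} ≤ k} ≤ #(range (k + 1)) := by
        refine card_le_card_of_injOn (fun x => #{y ∈ s | p y < p x}) (fun x hx => ?_)
          (fun x hx x' hx' hxx' => ?_)
        · simpa [Nat.lt_succ_iff] using (mem_filter.mp hx).2
        · have hx := (mem_filter.mp hx).1
          have hx' := (mem_filter.mp hx').1
          rcases lt_trichotomy (p x) (p x') with h | h | h
          · exact absurd hxx' (hmono x hx x' hx' h).ne
          · exact hp hx hx' h
          · exact absurd hxx' (hmono x' hx' x hx h).ne'
    _ = k + 1 := card_range _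

theorem card_filter_card_gt_le (s : Finset β) {p : β → α} (hp : Set.InjOn p s) (k : ℕ) :
    #{x ∈ s | #{y ∈ s | p x < p y} ≤ k} ≤ k + 1 :=
  card_filter_card_lt_le (α := αᵒᵈ) s (p := OrderDual.toDual ∘ p) hp k

end CountBelow

section Arc

variable [NeZero n]

theorem mem_arc_iff {i j t : ZMod n} : t ∈ Arc i j ↔ t ≠ i ∧ (t - i).val < (j - i).val := by
  simp [Arc, Nat.pos_iff_ne_zero, sub_eq_zero]

theorem mem_arc_swap_iff {i j t : ZMod n} (hij : i ≠ j) :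
    t ∈ Arc j i ↔ (j - i).val < (t - i).val := by
  have hsum : (t - j) + (j - i) = t - i := sub_add_sub_cancel t j i
  have hji : (i - j).val = n - (j - i).val := by
    rw [← neg_sub, ZMod.neg_val, if_neg (sub_ne_zero.mpr hij.symm)]
  have hlt := (t - j).val_lt
  have hj0 : (j - i).val ≠ 0 := by simpa [sub_eq_zero] using hij.symm
  simp only [Arc, mem_filter, mem_univ, true_and, hji]
  by_cases hwrap : (t - j).val + (j - i).val < n
  · rw [← hsum, ZMod.val_add_of_lt hwrap]
    omega
  · rw [← hsum, ZMod.val_add_of_le (not_lt.mp hwrap)]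
    omega

end Arc

section Visibility

variable [NeZero n] (ℓ : ZMod n → ℝ)

theorem exceedCount_eq_of_lt {u v : ZMod n} (h : ℓ v < ℓ u) :
    exceedCount ℓ v u = #{t ∈ univ.filter (ℓ v < ℓ ·) | (t - v).val < (u - v).val} := by
  rw [exceedCount, min_eq_left h.le]
  congr 1
  ext t
  simp only [mem_filter, mem_univ, true_and, mem_arc_iff]
  exact ⟨fun ⟨⟨_, hlt⟩, hv⟩ => ⟨hv, hlt⟩,
    fun ⟨hv, hlt⟩ => ⟨⟨fun htv => (htv ▸ hv).false, hlt⟩, hv⟩⟩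

theorem exceedCount_swap_eq_of_lt {u v : ZMod n} (h : ℓ v < ℓ u) :
    exceedCount ℓ u v = #{t ∈ univ.filter (ℓ v < ℓ ·) | (u - v).val < (t - v).val} := by
  rw [exceedCount, min_eq_right h.le]
  congr 1
  ext t
  simp only [mem_filter, mem_univ, true_and, mem_arc_swap_iff fun e => h.ne (congrArg ℓ e)]
  exact and_comm

theorem card_taller_neighbors_le (k : ℕ) (v : ZMod n) :
    #{u | (CylGraph k ℓ).Adj v u ∧ ℓ v < ℓ u} ≤ 2 * k + 2 := by
  set T : Finset (ZMod n) := univ.filter (ℓ v < ℓ ·)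
  have hp : Set.InjOn (fun t => (t - v).val) T := fun x _ y _ h =>
    sub_left_injective (ZMod.val_injective n h)
  calc #{u | (CylGraph k ℓ).Adj v u ∧ ℓ v < ℓ u}
      ≤ #({u ∈ T | #{t ∈ T | (t - v).val < (u - v).val} ≤ k} ∪
          {u ∈ T | #{t ∈ T | (u - v).val < (t - v).val} ≤ k}) := by
        refine card_le_card fun u hu => ?_
        obtain ⟨⟨-, hvis⟩, hlt⟩ := (mem_filter.mp hu).2
        have huT : u ∈ T := mem_filter.mpr ⟨mem_univ _, hlt⟩
        rw [exceedCount_eq_of_lt ℓ hlt, exceedCount_swap_eq_of_lt ℓ hlt] at hvis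
        simpa only [mem_union, mem_filter, huT, true_and] using hvis
    _ ≤ (k + 1) + (k + 1) := (card_union_le _ _).trans
        (add_le_add (card_filter_card_lt_le T hp k) (card_filter_card_gt_le T hp k))
    _ = 2 * k + 2 := by ring

end Visibility

/-- cylindrical semi-bar `k`-visibility graphs with distinct lengths have
chromatic number at most `2k+3`. -/
theorem stmt4 (k : ℕ) [NeZero n] (ℓ : ZMod n → ℝ) (hinj : Function.Injective ℓ) :
    (CylGraph k ℓ).chromaticNumber ≤ ((2 * k + 3 : ℕ) : ℕ∞) :=
  ((CylGraph k ℓ).colorable_of_card_higher_neighbors_le ℓ (2 * k + 2)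
    (fun _ _ h => hinj.ne h.1) (card_taller_neighbors_le ℓ k)).chromaticNumber_le
end

section
/- The maximum number of edges in a cylindrical semi-bar k-visibility graph with n vertices is (k+1)(2n−2k−3) when n ≥ 2k+2, and n(n−1)/2 when n ≤ 2k+2. (Upper bound: any cylindrical semi-bar k-visibility graph with arbitrary, possibly non-injective visibility, has at most this many edges; lower bound: this number is achieved.) -/
open Finset
open scoped Classical

variable {n : ℕ}

/-- Count of bars on the open arc from `i` to `j` with length `≥ min (ℓ i) (ℓ j)` (the
correct blocking condition when lengths may coincide). -/
noncomputable def exceedCountGe [NeZero n] (ℓ : ZMod n → ℝ) (i j : ZMod n) : ℕ :=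
  ((Arc i j).filter fun t => min (ℓ i) (ℓ j) ≤ ℓ t).card

/-- Cylindrical semi-bar `k`-visibility graph for arbitrary (possibly non-injective) lengths. -/
noncomputable def CylGraphGe (k : ℕ) [NeZero n] (ℓ : ZMod n → ℝ) : SimpleGraph (ZMod n) where
  Adj i j := i ≠ j ∧ (exceedCountGe ℓ i j ≤ k ∨ exceedCountGe ℓ j i ≤ k)
  symm := ⟨fun i j h => ⟨h.1.symm, h.2.symm⟩⟩
  loopless := ⟨fun i h => h.1 rfl⟩

noncomputable instance (k : ℕ) [NeZero n] (ℓ : ZMod n → ℝ) :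
    DecidableRel (CylGraphGe k ℓ).Adj := Classical.decRel _

/-! Induction on `n`, deleting a shortest bar `v`. Removing `v` can only remove blockers, so the
remaining edges form a subgraph of the graph of the remaining `n - 1` bars, and no bar on either
arc from `v` is shorter than `v`: thus `v` sees exactly the `k + 1` nearest vertices on each side,
and the edge count grows by at most `2k + 2` per vertex once `n ≥ 2k + 4`. For `n ≤ 2k + 3` the two
open arcs between any two vertices hold `n - 2 ≤ 2k + 1` vertices together, so one holds at most
`k` and the graph is complete. For lengths increasing along `0, 1, …, n - 1` the bar at `0` is
strictly shortest, blocks nothing, and what remains is again increasing, so every bound is attained.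
-/

open SimpleGraph

lemma SimpleGraph.card_edgeFinset_eq_card_edgeFinset_comap_add_degree {V W : Type*} [Fintype V]
    [Fintype W] [DecidableEq W] (G : SimpleGraph W) {f : V ↪ W} {x : W} [DecidableRel G.Adj]
    [DecidableRel (G.comap f).Adj] (hf : Set.range f = {x}ᶜ) :
    #G.edgeFinset = #(G.comap f).edgeFinset + G.degree x := by
  have hmem : ∀ v, f v ∈ ({x}ᶜ : Set W) := fun v => hf ▸ Set.mem_range_self v
  let e : V ≃ ({x}ᶜ : Set W) := Equiv.ofBijective (fun v => ⟨f v, hmem v⟩)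
    ⟨fun v w h => f.injective (congrArg Subtype.val h),
     fun w => by
       obtain ⟨v, hv⟩ : (w : W) ∈ Set.range f := by rw [hf]; exact w.2
       exact ⟨v, Subtype.ext hv⟩⟩
  have iso : G.comap f ≃g G.induce {x}ᶜ := ⟨e, Iff.rfl⟩
  have hdeg : G.degree x ≤ #G.edgeFinset := by
    rw [← card_incidenceFinset_eq_degree]
    exact card_le_card (G.incidenceFinset_subset x)
  rw [iso.card_edgeFinset_eq, card_edgeFinset_induce_compl_singleton,
    card_edgeFinset_deleteIncidenceSet]
  omega

lemma exceedCountGe_comp {m : ℕ} [NeZero m] (ℓ : ZMod n → ℝ) (e : ZMod m ↪ ZMod n)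
    (a b : ZMod m) :
    exceedCountGe (ℓ ∘ e) a b = #{t ∈ (Arc a b).map e | min (ℓ (e a)) (ℓ (e b)) ≤ ℓ t} := by
  rw [filter_map, card_map]
  rfl

section CylGraphGe

variable [NeZero n]

lemma val_sub_add_val (a b : ZMod n) :
    (a - b).val + b.val = a.val ∨ (a - b).val + b.val = a.val + n := by
  rcases lt_or_ge ((a - b).val + b.val) n with h | h
  · left; rw [← ZMod.val_add_of_lt h, sub_add_cancel]
  · right; rw [ZMod.val_add_val_of_le h, sub_add_cancel]

lemma mem_arc_iff_val {i j t : ZMod n} :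
    t ∈ Arc i j ↔
      i.val < t.val ∧ t.val < j.val ∨ j.val < i.val ∧ (i.val < t.val ∨ t.val < j.val) := by
  have := ZMod.val_lt t; have := ZMod.val_lt i; have := ZMod.val_lt j
  have := ZMod.val_lt (t - i); have := ZMod.val_lt (j - i)
  rcases val_sub_add_val t i with ht | ht <;> rcases val_sub_add_val j i with hj | hj <;>
    simp only [Arc, mem_filter, mem_univ, true_and] <;> omega

lemma card_filter_val (p : ℕ → Prop) [DecidablePred p] :
    #{t : ZMod n | p t.val} = #{d ∈ range n | p d} := by
  refine card_bij (fun t _ => t.val) ?_ (fun _ _ _ _ h => ZMod.val_injective n h) ?_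
  · intro t ht
    simpa [ZMod.val_lt] using ht
  · intro d hd
    simp only [mem_filter, mem_range] at hd
    exact ⟨d, by simpa [ZMod.val_cast_of_lt hd.1] using hd.2, ZMod.val_cast_of_lt hd.1⟩

lemma card_arc_zero_left (j : ZMod n) : #(Arc 0 j) = j.val - 1 := by
  have hArc : Arc 0 j = ({t : ZMod n | 0 < t.val ∧ t.val < j.val} : Finset _) := by
    ext t; simp [Arc]
  have hIoo : ({d ∈ range n | 0 < d ∧ d < j.val} : Finset ℕ) = Ioo 0 j.val := by
    ext d
    simp only [mem_filter, mem_range, mem_Ioo, and_iff_right_iff_imp]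
    exact fun h => h.2.trans (ZMod.val_lt j)
  rw [hArc, card_filter_val (fun d => 0 < d ∧ d < j.val), hIoo, Nat.card_Ioo, Nat.sub_zero]

lemma card_arc_add_card_arc {i j : ZMod n} (hij : i ≠ j) :
    #(Arc i j) + #(Arc j i) = n - 2 := by
  have hval : i.val ≠ j.val := fun h => hij (ZMod.val_injective n h)
  have hdisj : Disjoint (Arc i j) (Arc j i) := by
    rw [Finset.disjoint_left]
    intro t h₁ h₂
    rw [mem_arc_iff_val] at h₁ h₂
    omega
  have hunion : Arc i j ∪ Arc j i = ({i, j} : Finset (ZMod n))ᶜ := by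
    ext t
    have hti : t = i ↔ t.val = i.val := (ZMod.val_injective n).eq_iff.symm
    have htj : t = j ↔ t.val = j.val := (ZMod.val_injective n).eq_iff.symm
    simp only [mem_union, mem_arc_iff_val, mem_compl, mem_insert, mem_singleton, hti, htj]
    omega
  rw [← card_union_of_disjoint hdisj, hunion, card_compl, ZMod.card, card_pair hij]

lemma arc_add (i j c : ZMod n) : Arc (i + c) (j + c) = (Arc i j).map (addRightEmbedding c) := by
  ext t
  simp only [Arc, mem_map, mem_filter, mem_univ, true_and, addRightEmbedding_apply]
  constructor
  · intro ht
    refine ⟨t - c, ?_, sub_add_cancel t c⟩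
    simpa only [sub_sub, add_comm c i, add_sub_add_right_eq_sub] using ht
  · rintro ⟨s, hs, rfl⟩
    simpa only [add_sub_add_right_eq_sub] using hs

lemma cylGraphGe_adj {k : ℕ} {ℓ : ZMod n → ℝ} {i j : ZMod n} :
    (CylGraphGe k ℓ).Adj i j ↔ i ≠ j ∧ (exceedCountGe ℓ i j ≤ k ∨ exceedCountGe ℓ j i ≤ k) :=
  Iff.rfl

lemma exceedCountGe_le_card_arc (ℓ : ZMod n → ℝ) (i j : ZMod n) :
    exceedCountGe ℓ i j ≤ #(Arc i j) :=
  card_filter_le _ _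

lemma exceedCountGe_eq_card_arc {ℓ : ZMod n → ℝ} {i j : ZMod n}
    (h : ∀ t, min (ℓ i) (ℓ j) ≤ ℓ t) :
    exceedCountGe ℓ i j = #(Arc i j) :=
  congrArg card (filter_true_of_mem fun t _ => h t)

lemma cylGraphGe_eq_top (k : ℕ) (ℓ : ZMod n → ℝ) (hn : n ≤ 2 * k + 3) : CylGraphGe k ℓ = ⊤ := by
  ext i j
  refine ⟨fun h => h.1, fun hij => ⟨hij, ?_⟩⟩
  have := card_arc_add_card_arc hij
  have := exceedCountGe_le_card_arc ℓ i j
  have := exceedCountGe_le_card_arc ℓ j i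
  omega

lemma card_edgeFinset_cylGraphGe_of_le (k : ℕ) (ℓ : ZMod n → ℝ) (hn : n ≤ 2 * k + 3) :
    #(CylGraphGe k ℓ).edgeFinset = n.choose 2 := by
  have := card_edgeFinset_top_eq_card_choose_two (V := ZMod n)
  rw [ZMod.card] at this
  convert this using 3
  exact cylGraphGe_eq_top k ℓ hn

lemma degree_zero_cylGraphGe {k : ℕ} {ℓ : ZMod n → ℝ} (h0 : ∀ t, ℓ 0 ≤ ℓ t)
    (hn : 2 * k + 4 ≤ n) :
    (CylGraphGe k ℓ).degree 0 = 2 * k + 2 := by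
  have hArc : ∀ j : ZMod n, j ≠ 0 → #(Arc j 0) = n - 1 - j.val := fun j hj => by
    have := card_arc_add_card_arc hj; have := card_arc_zero_left j
    have := ZMod.val_pos.2 hj; have := ZMod.val_lt j
    omega
  have hnbr : (CylGraphGe k ℓ).neighborFinset 0 =
      ({j : ZMod n | j.val ≠ 0 ∧ (j.val - 1 ≤ k ∨ n - 1 - j.val ≤ k)} : Finset _) := by
    ext j
    simp only [mem_neighborFinset, cylGraphGe_adj, mem_filter, mem_univ, true_and,
      ne_eq, ZMod.val_eq_zero, eq_comm (a := (0 : ZMod n))]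
    refine and_congr_right fun hj => ?_
    rw [exceedCountGe_eq_card_arc fun t => min_le_of_left_le (h0 t),
      exceedCountGe_eq_card_arc fun t => min_le_of_right_le (h0 t), card_arc_zero_left,
      hArc j hj]
  have hval : ({d ∈ range n | d ≠ 0 ∧ (d - 1 ≤ k ∨ n - 1 - d ≤ k)} : Finset ℕ) =
      Icc 1 (k + 1) ∪ Icc (n - 1 - k) (n - 1) := by
    ext d; simp only [mem_filter, mem_range, mem_union, mem_Icc]; omega
  have hdisj : Disjoint (Icc 1 (k + 1)) (Icc (n - 1 - k) (n - 1)) := by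
    rw [Finset.disjoint_left]; intro d; simp only [mem_Icc]; omega
  rw [← card_neighborFinset_eq_degree, hnbr,
    card_filter_val (fun d => d ≠ 0 ∧ (d - 1 ≤ k ∨ n - 1 - d ≤ k)), hval,
    card_union_of_disjoint hdisj, Nat.card_Icc, Nat.card_Icc]
  omega

lemma cylGraphGe_comp_add (k : ℕ) (ℓ : ZMod n → ℝ) (c : ZMod n) :
    CylGraphGe k (fun x => ℓ (x + c)) = (CylGraphGe k ℓ).comap (Equiv.addRight c) := by
  have hcount : ∀ i j, exceedCountGe (fun x => ℓ (x + c)) i j = exceedCountGe ℓ (i + c) (j + c) :=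
    fun i j => by
      have := exceedCountGe_comp ℓ (addRightEmbedding c) i j
      rwa [← arc_add] at this
  ext i j
  simp only [comap_adj, Equiv.coe_addRight, cylGraphGe_adj, hcount, ne_eq, add_left_inj]

lemma card_edgeFinset_cylGraphGe_comp_add (k : ℕ) (ℓ : ZMod n → ℝ) (c : ZMod n) :
    #(CylGraphGe k (fun x => ℓ (x + c))).edgeFinset = #(CylGraphGe k ℓ).edgeFinset :=
  Iso.card_edgeFinset_eq (cylGraphGe_comp_add k ℓ c ▸ Iso.comap (Equiv.addRight c) _)

end CylGraphGe

section DeleteZero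

variable {m : ℕ} [NeZero m]

/-- `ZMod m` as the vertices `1, …, m` of `ZMod (m + 1)`, keeping their cyclic order. -/
def succEmb (m : ℕ) [NeZero m] : ZMod m ↪ ZMod (m + 1) where
  toFun x := ((x.val + 1 : ℕ) : ZMod (m + 1))
  inj' x y h := by
    have := congrArg ZMod.val h
    simp only [ZMod.val_cast_of_lt (Nat.succ_lt_succ (ZMod.val_lt _))] at this
    exact ZMod.val_injective m (by omega)

lemma val_succEmb (x : ZMod m) : (succEmb m x).val = x.val + 1 :=
  ZMod.val_cast_of_lt (Nat.succ_lt_succ (ZMod.val_lt x))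

lemma succEmb_ne_zero (x : ZMod m) : succEmb m x ≠ 0 := by
  intro h
  simpa [h] using val_succEmb x

lemma exists_succEmb_eq {z : ZMod (m + 1)} (hz : z ≠ 0) : ∃ x, succEmb m x = z := by
  have h0 := ZMod.val_pos.2 hz
  have hz' : z.val - 1 < m := by have := ZMod.val_lt z; omega
  refine ⟨(z.val - 1 : ℕ), ZMod.val_injective _ ?_⟩
  rw [val_succEmb, ZMod.val_cast_of_lt hz']
  omega

lemma range_succEmb : Set.range (succEmb m) = {0}ᶜ := by
  ext z
  exact ⟨fun ⟨x, hx⟩ => hx ▸ succEmb_ne_zero x, exists_succEmb_eq⟩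

lemma arc_map_succEmb (a b : ZMod m) :
    (Arc a b).map (succEmb m) = (Arc (succEmb m a) (succEmb m b)).erase 0 := by
  ext z
  rw [mem_map, mem_erase]
  by_cases hz : z = 0
  · simp only [hz, ne_eq, not_true_eq_false, false_and, iff_false, not_exists, not_and]
    exact fun x _ => succEmb_ne_zero x
  · obtain ⟨x, rfl⟩ := exists_succEmb_eq hz
    simp only [(succEmb m).injective.eq_iff, exists_eq_right, ne_eq, hz, not_false_eq_true,
      true_and, mem_arc_iff_val, val_succEmb]
    omega

variable (k : ℕ) (ℓ : ZMod (m + 1) → ℝ)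

lemma exceedCountGe_comp_succEmb (a b : ZMod m) :
    exceedCountGe (ℓ ∘ succEmb m) a b =
      #{t ∈ (Arc (succEmb m a) (succEmb m b)).erase 0 |
        min (ℓ (succEmb m a)) (ℓ (succEmb m b)) ≤ ℓ t} := by
  rw [exceedCountGe_comp, arc_map_succEmb]

lemma comap_succEmb_le : (CylGraphGe k ℓ).comap (succEmb m) ≤ CylGraphGe k (ℓ ∘ succEmb m) := by
  have hcount : ∀ a b, exceedCountGe (ℓ ∘ succEmb m) a b ≤
      exceedCountGe ℓ (succEmb m a) (succEmb m b) := fun a b => by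
    rw [exceedCountGe_comp_succEmb, exceedCountGe]
    exact card_le_card (filter_subset_filter _ (erase_subset _ _))
  rintro a b ⟨hab, h⟩
  exact ⟨fun h' => hab (congrArg _ h'), h.imp (hcount a b).trans (hcount b a).trans⟩

lemma comap_succEmb_eq (h0 : ∀ t, t ≠ 0 → ℓ 0 < ℓ t) :
    (CylGraphGe k ℓ).comap (succEmb m) = CylGraphGe k (ℓ ∘ succEmb m) := by
  have hcount : ∀ a b, exceedCountGe (ℓ ∘ succEmb m) a b =
      exceedCountGe ℓ (succEmb m a) (succEmb m b) := fun a b => by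
    rw [exceedCountGe_comp_succEmb, exceedCountGe, filter_erase, erase_eq_of_notMem]
    simp only [mem_filter, min_le_iff, not_and, not_or, not_le]
    exact fun _ => ⟨h0 _ (succEmb_ne_zero a), h0 _ (succEmb_ne_zero b)⟩
  ext a b
  simp only [comap_adj, cylGraphGe_adj, hcount, (succEmb m).injective.ne_iff]

end DeleteZero

def maxEdges (n k : ℕ) : ℕ :=
  if 2 * k + 2 ≤ n then (k + 1) * (2 * n - (2 * k + 3)) else n * (n - 1) / 2

lemma maxEdges_of_le {n k : ℕ} (h : n ≤ 2 * k + 3) : maxEdges n k = n.choose 2 := by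
  rw [maxEdges, Nat.choose_two_right]
  split_ifs with h'
  · obtain rfl | rfl : n = 2 * k + 2 ∨ n = 2 * k + 3 := by omega
    · rw [show 2 * (2 * k + 2) - (2 * k + 3) = 2 * k + 1 by omega,
        show 2 * k + 2 - 1 = 2 * k + 1 by omega]
      exact (Nat.div_eq_of_eq_mul_left two_pos (by ring)).symm
    · rw [show 2 * (2 * k + 3) - (2 * k + 3) = 2 * k + 3 by omega,
        show 2 * k + 3 - 1 = 2 * k + 2 by omega]
      exact (Nat.div_eq_of_eq_mul_left two_pos (by ring)).symm
  · rfl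

lemma maxEdges_succ {m k : ℕ} (h : 2 * k + 3 ≤ m) :
    maxEdges (m + 1) k = maxEdges m k + (2 * k + 2) := by
  rw [maxEdges, maxEdges, if_pos (by omega), if_pos (by omega),
    show 2 * (m + 1) - (2 * k + 3) = 2 * m - (2 * k + 3) + 2 by omega]
  ring

theorem card_edgeFinset_cylGraphGe_le (k : ℕ) [NeZero n] (ℓ : ZMod n → ℝ) :
    #(CylGraphGe k ℓ).edgeFinset ≤ maxEdges n k := by
  revert ℓ
  revert ‹NeZero n›
  induction n with
  | zero => intro _; exact absurd rfl (NeZero.ne 0)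
  | succ m ih =>
    intro _ ℓ
    rcases le_or_gt (m + 1) (2 * k + 3) with hsmall | hlarge
    · rw [card_edgeFinset_cylGraphGe_of_le k ℓ hsmall, maxEdges_of_le hsmall]
    have : NeZero m := ⟨by omega⟩
    obtain ⟨v, -, hv⟩ := exists_min_image univ ℓ univ_nonempty
    set ℓ' : ZMod (m + 1) → ℝ := fun x => ℓ (x + v)
    have h0 : ∀ t, ℓ' 0 ≤ ℓ' t := fun t => by simpa [ℓ'] using hv _ (mem_univ _)
    calc #(CylGraphGe k ℓ).edgeFinset
        = #(CylGraphGe k ℓ').edgeFinset := (card_edgeFinset_cylGraphGe_comp_add k ℓ v).symm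
      _ = #((CylGraphGe k ℓ').comap (succEmb m)).edgeFinset + (CylGraphGe k ℓ').degree 0 :=
          card_edgeFinset_eq_card_edgeFinset_comap_add_degree _ range_succEmb
      _ ≤ maxEdges m k + (2 * k + 2) := by
          rw [degree_zero_cylGraphGe h0 (by omega)]
          gcongr
          exact (card_le_card (edgeFinset_mono (comap_succEmb_le k ℓ'))).trans (ih _)
      _ = maxEdges (m + 1) k := (maxEdges_succ (by omega)).symm

theorem card_edgeFinset_cylGraphGe_of_val_lt (k : ℕ) [NeZero n] (ℓ : ZMod n → ℝ)
    (hℓ : ∀ x y : ZMod n, x.val < y.val → ℓ x < ℓ y) :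
    #(CylGraphGe k ℓ).edgeFinset = maxEdges n k := by
  revert ℓ
  revert ‹NeZero n›
  induction n with
  | zero => intro _; exact absurd rfl (NeZero.ne 0)
  | succ m ih =>
    intro _ ℓ hℓ
    rcases le_or_gt (m + 1) (2 * k + 3) with hsmall | hlarge
    · rw [card_edgeFinset_cylGraphGe_of_le k ℓ hsmall, maxEdges_of_le hsmall]
    have : NeZero m := ⟨by omega⟩
    have h0 : ∀ t, t ≠ 0 → ℓ 0 < ℓ t := fun t ht => hℓ 0 t (by simpa using ZMod.val_pos.2 ht)
    have hℓ' : ∀ x y : ZMod m, x.val < y.val → (ℓ ∘ succEmb m) x < (ℓ ∘ succEmb m) y :=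
      fun x y h => hℓ _ _ (by simpa [val_succEmb] using h)
    have h0' : ∀ t, ℓ 0 ≤ ℓ t := fun t => by
      rcases eq_or_ne t 0 with rfl | ht
      exacts [le_rfl, (h0 t ht).le]
    calc #(CylGraphGe k ℓ).edgeFinset
        = #((CylGraphGe k ℓ).comap (succEmb m)).edgeFinset + (CylGraphGe k ℓ).degree 0 :=
          card_edgeFinset_eq_card_edgeFinset_comap_add_degree _ range_succEmb
      _ = maxEdges m k + (2 * k + 2) := by
          rw [degree_zero_cylGraphGe h0' (by omega), ← ih _ hℓ']
          congr 1
          exact Iso.card_edgeFinset_eq (comap_succEmb_eq k ℓ h0 ▸ Iso.refl)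
      _ = maxEdges (m + 1) k := (maxEdges_succ (by omega)).symm

/-- the maximum number of edges in a cylindrical semi-bar `k`-visibility graph
on `n` vertices is `(k+1)(2n-2k-3)` for `n ≥ 2k+2` and `n(n-1)/2` for `n ≤ 2k+2`: every
such graph has at most this many edges, and some such graph attains it. -/
theorem stmt7 (k : ℕ) [NeZero n] :
    (∀ ℓ : ZMod n → ℝ, (CylGraphGe k ℓ).edgeFinset.card ≤
        if 2 * k + 2 ≤ n then (k + 1) * (2 * n - (2 * k + 3)) else n * (n - 1) / 2) ∧
    (∃ ℓ : ZMod n → ℝ, (CylGraphGe k ℓ).edgeFinset.card =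
        if 2 * k + 2 ≤ n then (k + 1) * (2 * n - (2 * k + 3)) else n * (n - 1) / 2) :=
  ⟨card_edgeFinset_cylGraphGe_le k,
    ⟨fun i => i.val, card_edgeFinset_cylGraphGe_of_val_lt k _ fun _ _ h => by exact_mod_cast h⟩⟩
end

section
/- For every k ≥ 1 there exists a (k+2)-quasiplanar convex geometric graph that is not a subgraph of any cylindrical semi-bar k-visibility graph. Specifically, the drawing D on 4(k+1) cyclically ordered vertices v_1, …, v_{4(k+1)} with chords {v_i, v_{3(k+1)+1−i}} and {v_{k+1+i}, v_{4(k+1)+1−i}} for 1 ≤ i ≤ k+1 is (k+2)-quasiplanar, but every maximal (k+2)-quasiplanar convex geometric representation containing D has minimum degree at least 2k+3, hence is not (2k+2)-degenerate. -/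
open Finset
open scoped Classical

variable {n : ℕ}

/-- Two chords `{a,b}` and `{c,d}` with all four endpoints distinct cross iff exactly one of
`c, d` lies on the open cyclic arc from `a` to `b`. -/
def Crosses [NeZero n] (a b c d : ZMod n) : Prop :=
  a ≠ b ∧ c ≠ d ∧ a ≠ c ∧ a ≠ d ∧ b ≠ c ∧ b ≠ d ∧
    Xor' (c ∈ Arc a b) (d ∈ Arc a b)

/-- A convex geometric representation (edges drawn as chords of the cyclic order on `ZMod n`)
is `m`-quasiplanar if it has no `m` pairwise crossing edges. -/
def QuasiPlanar (m : ℕ) [NeZero n] (G : SimpleGraph (ZMod n)) : Prop :=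
  ¬ ∃ f g : Fin m → ZMod n, (∀ p, G.Adj (f p) (g p)) ∧
      ∀ p q, p ≠ q → Crosses (f p) (g p) (f q) (g q)

/-- Maximality: adding any absent chord creates `m` pairwise crossing edges. -/
def MaximalQP (m : ℕ) [NeZero n] (G : SimpleGraph (ZMod n)) : Prop :=
  ∀ a b : ZMod n, a ≠ b → ¬ G.Adj a b →
    ¬ QuasiPlanar m (G ⊔ SimpleGraph.fromEdgeSet {s(a, b)})

/-! Chords `{a, b}` and `{c, d}` with `a + b = c + d` are parallel in the regular `n`-gon, so they
never cross. The drawing `D` is the union of two such parallel classes, so among any three of its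
chords two do not cross. Conversely, in a maximal `(k+2)`-quasiplanar `G` every chord `{v, v + d}`
with `d ≤ k + 1` is present: any `k + 1` pairwise crossing chords that cross it need `k + 1`
distinct endpoints among the `d - 1 ≤ k` vertices it cuts off. These `2k + 2` short chords at `v`,
together with the long chord of `D` at `v`, give degree at least `2k + 3`. -/

section Chords

variable [NeZero n]

lemma mem_Arc {a b t : ZMod n} : t ∈ Arc a b ↔ 0 < (t - a).val ∧ (t - a).val < (b - a).val := by
  simp [Arc]

lemma ZMod.val_add_eq_or (x y : ZMod n) :
    (x + y).val = x.val + y.val ∨ (x + y).val + n = x.val + y.val := by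
  rcases lt_or_ge (x.val + y.val) n with h | h
  · exact .inl (ZMod.val_add_of_lt h)
  · have := ZMod.val_lt (x + y)
    rw [ZMod.val_add_of_le h] at this ⊢
    omega

lemma card_filter_val_sub_mem (v : ZMod n) {S : Finset ℕ} (hS : ∀ d ∈ S, d < n) :
    (univ.filter fun u => (u - v).val ∈ S).card = S.card := by
  refine card_nbij' (fun u => (u - v).val) (fun d => v + d) ?_ ?_ ?_ ?_
  · intro u hu
    simpa using hu
  · intro d hd
    simpa [ZMod.val_natCast_of_lt (hS d hd)] using hd
  · intro u _
    simp
  · intro d hd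
    simp [ZMod.val_natCast_of_lt (hS d hd)]

lemma card_Arc (a b : ZMod n) : (Arc a b).card = (b - a).val - 1 := by
  have h := card_filter_val_sub_mem a (S := Ioo 0 (b - a).val) fun d hd =>
    (mem_Ioo.mp hd).2.trans (ZMod.val_lt _)
  rw [Nat.card_Ioo, Nat.sub_zero] at h
  simpa [Arc] using h

lemma mem_Arc_swap_iff {a b t : ZMod n} (hab : a ≠ b) (hta : t ≠ a) (htb : t ≠ b) :
    t ∈ Arc b a ↔ t ∉ Arc a b := by
  have hB : (b - a).val ≠ 0 := by simpa [ZMod.val_eq_zero, sub_eq_zero] using hab.symm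
  have hX : (t - a).val ≠ 0 := by simpa [ZMod.val_eq_zero, sub_eq_zero] using hta
  have hXB : (t - a).val ≠ (b - a).val :=
    fun h => htb (sub_left_inj.mp (ZMod.val_injective n h))
  have hneg : (-(b - a)).val = n - (b - a).val := by
    rw [ZMod.neg_val, if_neg (by simpa [ZMod.val_eq_zero] using hB)]
  have hsum := ZMod.val_add_eq_or (t - a) (-(b - a))
  have := ZMod.val_lt (b - a)
  rw [mem_Arc, mem_Arc, show t - b = (t - a) + -(b - a) by ring, show a - b = -(b - a) by ring]
  have := ZMod.val_lt (t - a)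
  have := ZMod.val_lt (t - a + -(b - a))
  omega

lemma Crosses.swap_left {a b c d : ZMod n} (h : Crosses a b c d) : Crosses b a c d := by
  obtain ⟨hab, hcd, hac, had, hbc, hbd, hx⟩ := h
  refine ⟨hab.symm, hcd, hbc, hbd, hac, had, ?_⟩
  rw [mem_Arc_swap_iff hab hac.symm hbc.symm, mem_Arc_swap_iff hab had.symm hbd.symm]
  exact xor_not_not.mpr hx

lemma not_crosses_of_add_eq_add {a b c d : ZMod n} (h : a + b = c + d) : ¬ Crosses a b c d := by
  rintro ⟨-, -, hac, had, -, -, hx⟩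
  have hC : (c - a).val ≠ 0 := by simpa [ZMod.val_eq_zero, sub_eq_zero] using hac.symm
  have hD : (d - a).val ≠ 0 := by simpa [ZMod.val_eq_zero, sub_eq_zero] using had.symm
  have hsum := ZMod.val_add_eq_or (c - a) (d - a)
  rw [show (c - a) + (d - a) = b - a by linear_combination -h] at hsum
  have := ZMod.val_lt (c - a)
  have := ZMod.val_lt (d - a)
  rw [mem_Arc, mem_Arc] at hx
  have := (xor_iff_not_iff _ _).mp hx
  omega

lemma card_le_card_Arc_of_pairwise_crosses {ι : Type*} {a b : ZMod n} {f g : ι → ZMod n}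
    {s : Finset ι} (hab : ∀ q ∈ s, Crosses a b (f q) (g q))
    (hpair : ∀ q ∈ s, ∀ q' ∈ s, q ≠ q' → Crosses (f q) (g q) (f q') (g q')) :
    s.card ≤ (Arc a b).card := by
  refine card_le_card_of_injOn (fun q => if f q ∈ Arc a b then f q else g q) ?_ ?_
  · intro q hq
    have := Xor.or (hab q hq).2.2.2.2.2.2
    dsimp only
    split_ifs with h
    exacts [h, this.resolve_left h]
  · intro q hq q' hq' heq
    by_contra hne
    obtain ⟨-, -, h₁, h₂, h₃, h₄, -⟩ := hpair q hq q' hq' hne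
    dsimp only at heq
    split_ifs at heq <;> contradiction

end Chords

section QuasiPlanar

variable [NeZero n] {m : ℕ} {G : SimpleGraph (ZMod n)}

lemma QuasiPlanar.mono {m' : ℕ} (h : QuasiPlanar m G) (hm : m ≤ m') : QuasiPlanar m' G := by
  rintro ⟨f, g, hadj, hcross⟩
  exact h ⟨f ∘ Fin.castLE hm, g ∘ Fin.castLE hm, fun p => hadj _,
    fun p q hpq => hcross _ _ ((Fin.castLE_injective hm).ne hpq)⟩

lemma quasiPlanar_of_forall_adj_add_mem (S : Finset (ZMod n))
    (hS : ∀ a b, G.Adj a b → a + b ∈ S) : QuasiPlanar (S.card + 1) G := by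
  rintro ⟨f, g, hadj, hcross⟩
  obtain ⟨p, -, q, -, hpq, hsum⟩ := exists_ne_map_eq_of_card_lt_of_maps_to
    (s := univ) (t := S) (f := fun p => f p + g p) (by simp) (fun p _ => hS _ _ (hadj p))
  exact not_crosses_of_add_eq_add hsum (hcross p q hpq)

lemma MaximalQP.adj_of_val_sub_lt (hmax : MaximalQP m G) (hG : QuasiPlanar m G) {v w : ZMod n}
    (hpos : 0 < (w - v).val) (hlt : (w - v).val < m) : G.Adj v w := by
  have hvw : v ≠ w := by rintro rfl; simp at hpos
  by_contra hadj
  obtain ⟨f, g, hadj', hcross⟩ := not_not.mp (hmax v w hvw hadj)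
  obtain ⟨p, hp⟩ : ∃ p, s(f p, g p) = s(v, w) := by
    by_contra! hnew
    refine hG ⟨f, g, fun p => ?_, hcross⟩
    simpa [hnew p] using hadj' p
  have hcross_new : ∀ q ∈ univ.erase p, Crosses v w (f q) (g q) := by
    intro q hq
    have := hcross p q (ne_of_mem_erase hq).symm
    rcases Sym2.eq_iff.mp hp with ⟨h₁, h₂⟩ | ⟨h₁, h₂⟩
    · rwa [h₁, h₂] at this
    · rw [h₁, h₂] at this
      exact this.swap_left
  have := card_le_card_Arc_of_pairwise_crosses hcross_new fun q _ q' _ => hcross q q'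
  rw [card_erase_of_mem (mem_univ p), card_univ, Fintype.card_fin, card_Arc] at this
  omega

lemma MaximalQP.two_mul_sub_one_le_card_adj (hmax : MaximalQP m G) (hG : QuasiPlanar m G)
    {v w : ZMod n} (hvw : G.Adj v w) (hm : m ≤ (w - v).val) (hm' : (w - v).val + m ≤ n) :
    2 * m - 1 ≤ (univ.filter fun u => G.Adj v u).card := by
  set δ := (w - v).val with hδ
  set S : Finset ℕ := insert δ (Icc 1 (m - 1) ∪ Icc (n + 1 - m) (n - 1)) with hS
  have hS_card : 2 * m - 1 ≤ S.card := by
    rw [card_insert_of_notMem (by simp only [mem_union, mem_Icc]; omega),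
      card_union_of_disjoint (disjoint_left.mpr fun d h₁ h₂ => by
        simp only [mem_Icc] at h₁ h₂; omega), Nat.card_Icc, Nat.card_Icc]
    omega
  have hS_lt : ∀ d ∈ S, d < n := by
    intro d hd
    simp only [hS, mem_insert, mem_union, mem_Icc] at hd
    have := ZMod.val_lt (w - v)
    omega
  rw [← card_filter_val_sub_mem v hS_lt] at hS_card
  refine hS_card.trans <| card_le_card fun u hu => mem_filter.mpr ⟨mem_univ u, ?_⟩
  simp only [hS, mem_filter, mem_univ, true_and, mem_insert, mem_union, mem_Icc] at hu
  rcases hu with hu | hu | hu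
  · rwa [sub_left_inj.mp (ZMod.val_injective n hu)]
  · exact hmax.adj_of_val_sub_lt hG (by omega) (by omega)
  · have hneg : (v - u).val = n - (u - v).val := by
      rw [← neg_sub, ZMod.neg_val, if_neg]
      rw [← ZMod.val_eq_zero]
      omega
    exact (hmax.adj_of_val_sub_lt hG (by omega) (by omega)).symm

end QuasiPlanar


def chordDrawing (n k : ℕ) : SimpleGraph (ZMod n) :=
  SimpleGraph.fromEdgeSet { e | ∃ i : ℕ, 1 ≤ i ∧ i ≤ k + 1 ∧
    (e = s(((i : ℕ) : ZMod n), ((3 * (k + 1) + 1 - i : ℕ) : ZMod n)) ∨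
     e = s(((k + 1 + i : ℕ) : ZMod n), ((4 * (k + 1) + 1 - i : ℕ) : ZMod n))) }

lemma add_eq_add_of_sym2_eq {α : Type*} [AddCommMagma α] {a b x y : α} (h : s(a, b) = s(x, y)) :
    a + b = x + y := by
  rcases Sym2.eq_iff.mp h with ⟨rfl, rfl⟩ | ⟨rfl, rfl⟩
  exacts [rfl, add_comm _ _]

lemma chordDrawing_adj_add_mem {k : ℕ} {a b : ZMod n} (h : (chordDrawing n k).Adj a b) :
    a + b ∈ ({((3 * (k + 1) + 1 : ℕ) : ZMod n), ((5 * (k + 1) + 1 : ℕ) : ZMod n)} : Finset _) := by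
  obtain ⟨⟨i, -, hi, he | he⟩, -⟩ := h
  · rw [add_eq_add_of_sym2_eq he, ← Nat.cast_add, Nat.add_sub_cancel' (by omega)]
    exact mem_insert_self _ _
  · rw [add_eq_add_of_sym2_eq he, ← Nat.cast_add,
      show k + 1 + i + (4 * (k + 1) + 1 - i) = 5 * (k + 1) + 1 by omega]
    exact mem_insert_of_mem (mem_singleton_self _)

lemma natCast_eq_natCast_of_eq_or_eq_add {x y : ℕ} (h : x = y ∨ x = y + n) :
    (x : ZMod n) = y := by
  rcases h with rfl | rfl
  · rfl
  · rw [Nat.cast_add, ZMod.natCast_self, add_zero]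

lemma exists_chordDrawing_adj [NeZero n] {k : ℕ} (hn : n = 4 * (k + 1)) (v : ZMod n) :
    ∃ w, (chordDrawing n k).Adj v w ∧ k + 2 ≤ (w - v).val ∧ (w - v).val + (k + 2) ≤ n := by
  obtain ⟨m, hm, rfl⟩ : ∃ m < n, (m : ZMod n) = v := ⟨v.val, v.val_lt, v.natCast_zmod_val⟩
  suffices ∃ δ, k + 2 ≤ δ ∧ δ + (k + 2) ≤ n ∧ ∃ i, 1 ≤ i ∧ i ≤ k + 1 ∧
      (s((m : ZMod n), ((m + δ : ℕ) : ZMod n)) =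
          s(((i : ℕ) : ZMod n), ((3 * (k + 1) + 1 - i : ℕ) : ZMod n)) ∨
        s((m : ZMod n), ((m + δ : ℕ) : ZMod n)) =
          s(((k + 1 + i : ℕ) : ZMod n), ((4 * (k + 1) + 1 - i : ℕ) : ZMod n))) by
    obtain ⟨δ, hδ, hδ', hedge⟩ := this
    have hval : (((m + δ : ℕ) : ZMod n) - m).val = δ := by
      rw [Nat.cast_add, add_sub_cancel_left, ZMod.val_natCast_of_lt (by omega)]
    refine ⟨_, ⟨hedge, fun h => ?_⟩, by rwa [hval], by rwa [hval]⟩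
    rw [h, sub_self, ZMod.val_zero] at hval
    omega
  have cast_eq := @natCast_eq_natCast_of_eq_or_eq_add n
  -- The first family of chords of `D` covers `1 ≤ m ≤ k + 1` and `2k + 3 ≤ m ≤ 3k + 3`,
  -- the second family the remaining vertices.
  rcases (by omega : m = 0 ∨ 1 ≤ m ∧ m ≤ k + 1 ∨ k + 2 ≤ m ∧ m ≤ 2 * k + 2 ∨
    2 * k + 3 ≤ m ∧ m ≤ 3 * k + 3 ∨ 3 * k + 4 ≤ m) with h | h | h | h | h
  · exact ⟨k + 2, by omega, by omega, 1, le_rfl, by omega,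
      .inr (Sym2.eq_iff.mpr (.inr ⟨(cast_eq (by omega)).symm, cast_eq (by omega)⟩))⟩
  · exact ⟨3 * k + 4 - 2 * m, by omega, by omega, m, by omega, by omega,
      .inl (Sym2.eq_iff.mpr (.inl ⟨cast_eq (by omega), cast_eq (by omega)⟩))⟩
  · exact ⟨5 * k + 6 - 2 * m, by omega, by omega, m - (k + 1), by omega, by omega,
      .inr (Sym2.eq_iff.mpr (.inl ⟨cast_eq (by omega), cast_eq (by omega)⟩))⟩
  · exact ⟨7 * k + 8 - 2 * m, by omega, by omega, 3 * k + 4 - m, by omega, by omega,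
      .inl (Sym2.eq_iff.mpr (.inr ⟨cast_eq (by omega), cast_eq (by omega)⟩))⟩
  · exact ⟨9 * k + 10 - 2 * m, by omega, by omega, 4 * k + 5 - m, by omega, by omega,
      .inr (Sym2.eq_iff.mpr (.inr ⟨cast_eq (by omega), cast_eq (by omega)⟩))⟩

/-- for `k ≥ 1`, the drawing `D` on `4(k+1)` cyclically ordered vertices with
chords `{v_i, v_{3(k+1)+1-i}}` and `{v_{k+1+i}, v_{4(k+1)+1-i}}` for `1 ≤ i ≤ k+1` is
`(k+2)`-quasiplanar, but every maximal `(k+2)`-quasiplanar convex geometric representation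
containing `D` has minimum degree at least `2k+3`, hence is not `(2k+2)`-degenerate (so its
graph is not a subgraph of any cylindrical semi-bar `k`-visibility graph). -/
theorem stmt11 (k : ℕ) (hk : 1 ≤ k) [NeZero n] (hn : n = 4 * (k + 1))
    (D : SimpleGraph (ZMod n))
    (hD : D = SimpleGraph.fromEdgeSet { e | ∃ i : ℕ, 1 ≤ i ∧ i ≤ k + 1 ∧
        (e = s(((i : ℕ) : ZMod n), ((3 * (k + 1) + 1 - i : ℕ) : ZMod n)) ∨
         e = s(((k + 1 + i : ℕ) : ZMod n), ((4 * (k + 1) + 1 - i : ℕ) : ZMod n))) }) :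
    QuasiPlanar (k + 2) D ∧
    ∀ G : SimpleGraph (ZMod n), D ≤ G → QuasiPlanar (k + 2) G → MaximalQP (k + 2) G →
      (∀ v : ZMod n, 2 * k + 3 ≤ (univ.filter fun u => G.Adj v u).card) ∧
      ¬ (∀ S : Finset (ZMod n), S.Nonempty →
            ∃ v ∈ S, (S.filter fun u => G.Adj v u).card ≤ 2 * k + 2) := by
  replace hD : D = chordDrawing n k := hD
  subst hD
  refine ⟨(quasiPlanar_of_forall_adj_add_mem _ fun _ _ => chordDrawing_adj_add_mem).mono ?_,
    fun G hDG hG hmax => ?_⟩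
  · have := card_le_two (a := ((3 * (k + 1) + 1 : ℕ) : ZMod n)) (b := ((5 * (k + 1) + 1 : ℕ)))
    omega
  have hdeg : ∀ v, 2 * k + 3 ≤ (univ.filter fun u => G.Adj v u).card := fun v => by
    obtain ⟨w, hvw, hw, hw'⟩ := exists_chordDrawing_adj hn v
    have := hmax.two_mul_sub_one_le_card_adj hG (hDG hvw) hw hw'
    omega
  refine ⟨hdeg, fun hdegenerate => ?_⟩
  obtain ⟨v, -, hv⟩ := hdegenerate univ univ_nonempty
  have := hdeg v
  omega
end

section
/- If in a maximal (k+2)-quasiplanar convex geometric representation E on ZMod n a vertex v has degree at most 2k+2, then the neighbors of v are exactly the vertices u such that {u, v} is a j-pair for some j ≤ k, i.e., v is adjacent precisely to the k+1 nearest vertices on each side of v in the cyclic order (when n ≥ 2k+3). -/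
open Finset
open scoped Classical

variable {n : ℕ}

/-!
If a chord `{v, u}` whose shorter side has at most `k` interior vertices were missing, maximality
would give `k + 2` pairwise crossing chords in `E ∪ {vu}`, one of them `{v, u}` itself since `E`
is `(k + 2)`-quasiplanar. Each of the other `k + 1` chords crosses `{v, u}`, hence has an endpoint
on the short side, and these endpoints are distinct: too many for `k` vertices. So all `2k + 2`
such `u` are neighbours of `v` (they are distinct as `n ≥ 2k + 3`), and the degree bound leaves
no room for others.
-/

section Arc

variable [NeZero n]

lemma ZMod.val_sub_add_val_of_lt {a b : ZMod n} (h : a.val < b.val) :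
    (a - b).val + b.val = a.val + n := by
  have hle : n ≤ (a - b).val + b.val := by
    by_contra hlt
    have := ZMod.val_add_of_lt (a := a - b) (b := b) (by omega)
    rw [sub_add_cancel] at this
    omega
  simpa using ZMod.val_add_val_of_le hle

lemma ZMod.val_sub_comm_of_ne {a b : ZMod n} (h : a ≠ b) : (b - a).val = n - (a - b).val := by
  rw [← neg_sub, ZMod.neg_val, if_neg (sub_ne_zero.mpr h)]

lemma card_filter_val_sub (v : ZMod n) (P : ℕ → Prop) [DecidablePred P] :
    #(univ.filter fun u : ZMod n => P (u - v).val) = #((range n).filter P) := by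
  refine card_nbij' (fun u => (u - v).val) (fun m => v + m) ?_ ?_ ?_ ?_
  · intro u hu
    simpa [ZMod.val_lt] using hu
  · intro m hm
    simp only [coe_filter, mem_range, Set.mem_ofPred_eq] at hm
    simpa [ZMod.val_cast_of_lt hm.1] using hm.2
  · intro u _
    simp
  · intro m hm
    simp only [coe_filter, mem_range, Set.mem_ofPred_eq] at hm
    simp [ZMod.val_cast_of_lt hm.1]

lemma card_arc (i j : ZMod n) : #(Arc i j) = (j - i).val - 1 := by
  have hlt := ZMod.val_lt (j - i)
  rw [Arc, card_filter_val_sub i fun m => 0 < m ∧ m < (j - i).val,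
    show (range n).filter (fun m => 0 < m ∧ m < (j - i).val) = Ioo 0 (j - i).val by
      ext m; simp only [mem_filter, mem_range, mem_Ioo]; omega,
    Nat.card_Ioo, Nat.sub_zero]

lemma mem_arc_iff_notMem_arc {a b t : ZMod n} (hab : a ≠ b) (hta : t ≠ a) (htb : t ≠ b) :
    t ∈ Arc a b ↔ t ∉ Arc b a := by
  have hx : 0 < (t - a).val := ZMod.val_pos.mpr (sub_ne_zero.mpr hta)
  have hxy : (t - a).val ≠ (b - a).val :=
    fun h => htb (sub_left_injective (ZMod.val_injective n h))
  have hab' := ZMod.val_sub_comm_of_ne hab.symm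
  have htb' : t - b = (t - a) - (b - a) := (sub_sub_sub_cancel_right t b a).symm
  have := ZMod.val_lt (t - a)
  simp only [Arc, mem_filter, mem_univ, true_and, hab', htb']
  rcases lt_or_gt_of_ne hxy with h | h
  · have := ZMod.val_sub_add_val_of_lt h
    omega
  · have := ZMod.val_sub h.le
    omega

end Arc

section Crossing

variable [NeZero n] {a b c d : ZMod n}

lemma Crosses.swap (h : Crosses a b c d) : Crosses b a c d := by
  obtain ⟨hab, hcd, hac, had, hbc, hbd, hx⟩ := h
  refine ⟨hab.symm, hcd, hbc, hbd, hac, had, ?_⟩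
  rw [mem_arc_iff_notMem_arc hab.symm hbc.symm hac.symm,
    mem_arc_iff_notMem_arc hab.symm hbd.symm had.symm]
  exact xor_not_not.mpr hx

lemma card_le_of_pairwise_crosses {m : ℕ} {f g : Fin m → ZMod n}
    (hcross : ∀ p q, p ≠ q → Crosses (f p) (g p) (f q) (g q)) (S : Finset (ZMod n))
    (hS : ∀ p, f p ∈ S ∨ g p ∈ S) : m ≤ #S := by
  let F : Fin m → ZMod n := fun p => if f p ∈ S then f p else g p
  have hF : ∀ p, F p = f p ∨ F p = g p := fun p => by
    by_cases h : f p ∈ S <;> simp [F, h]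
  have hmaps : ∀ p ∈ (univ : Finset (Fin m)), F p ∈ S := fun p _ => by
    rcases hS p with h | h <;> by_cases h' : f p ∈ S <;> simp_all [F]
  have hinj : Function.Injective F := by
    intro p q hpq
    by_contra hne
    -- crossing chords have four distinct endpoints
    obtain ⟨-, -, hfc, hfd, hgc, hgd, -⟩ := hcross p q hne
    rcases hF p with hp | hp <;> rcases hF q with hq | hq <;> rw [hp, hq] at hpq <;> tauto
  simpa using card_le_card_of_injOn F hmaps hinj.injOn

end Crossing

lemma adj_of_card_arc_le {k : ℕ} [NeZero n] {E : SimpleGraph (ZMod n)}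
    (hq : QuasiPlanar (k + 2) E) (hmax : MaximalQP (k + 2) E) {v u : ZMod n} (huv : u ≠ v)
    (hshort : #(Arc v u) ≤ k ∨ #(Arc u v) ≤ k) : E.Adj v u := by
  by_contra hadj
  refine hmax v u huv.symm hadj fun ⟨f, g, hadj', hcross⟩ => ?_
  have hedge : ∀ p, E.Adj (f p) (g p) ∨ s(f p, g p) = s(v, u) := fun p =>
    ((SimpleGraph.sup_adj ..).mp (hadj' p)).imp_right
      fun h => ((SimpleGraph.fromEdgeSet_adj {s(v, u)}).mp h).1
  obtain ⟨p₀, hp₀⟩ : ∃ p₀, s(f p₀, g p₀) = s(v, u) := by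
    by_contra! h
    exact hq ⟨f, g, fun p => (hedge p).resolve_right (h p), hcross⟩
  have hcross₀ : ∀ p, Crosses v u (f (p₀.succAbove p)) (g (p₀.succAbove p)) := fun p => by
    have h := hcross p₀ _ (Fin.ne_succAbove p₀ p)
    rcases Sym2.eq_iff.mp hp₀ with ⟨h₁, h₂⟩ | ⟨h₁, h₂⟩ <;> rw [h₁, h₂] at h
    exacts [h, h.swap]
  have hsub : ∀ p q, p ≠ q → Crosses (f (p₀.succAbove p)) (g (p₀.succAbove p))
      (f (p₀.succAbove q)) (g (p₀.succAbove q)) := fun p q hpq =>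
    hcross _ _ (Fin.succAbove_right_injective.ne hpq)
  rcases hshort with hS | hS
  · have := card_le_of_pairwise_crosses hsub (Arc v u)
      fun p => Xor.or (hcross₀ p).2.2.2.2.2.2
    omega
  · have := card_le_of_pairwise_crosses hsub (Arc u v)
      fun p => Xor.or (hcross₀ p).swap.2.2.2.2.2.2
    omega

lemma card_filter_short_pair (k : ℕ) [NeZero n] (hn : 2 * k + 3 ≤ n) (v : ZMod n) :
    #(univ.filter fun u => u ≠ v ∧ (#(Arc v u) ≤ k ∨ #(Arc u v) ≤ k)) = 2 * k + 2 := by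
  have hshort : ∀ u : ZMod n, (u ≠ v ∧ (#(Arc v u) ≤ k ∨ #(Arc u v) ≤ k)) ↔
      (0 < (u - v).val ∧ ((u - v).val ≤ k + 1 ∨ n - (k + 1) ≤ (u - v).val)) := fun u => by
    rcases eq_or_ne u v with rfl | huv
    · simp
    have := ZMod.val_pos.mpr (sub_ne_zero.mpr huv)
    have := ZMod.val_lt (u - v)
    rw [card_arc, card_arc, ZMod.val_sub_comm_of_ne huv]
    simp only [ne_eq, huv, not_false_eq_true, true_and]
    omega
  rw [filter_congr fun u _ => hshort u, card_filter_val_sub v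
      fun m => 0 < m ∧ (m ≤ k + 1 ∨ n - (k + 1) ≤ m),
    show (range n).filter (fun m => 0 < m ∧ (m ≤ k + 1 ∨ n - (k + 1) ≤ m)) =
      Icc 1 (k + 1) ∪ Icc (n - (k + 1)) (n - 1) by
      ext m; simp only [mem_filter, mem_range, mem_union, mem_Icc]; omega,
    card_union_of_disjoint (disjoint_left.mpr fun m hm hm' => by
      simp only [mem_Icc] at hm hm'; omega),
    Nat.card_Icc, Nat.card_Icc]
  omega

/-- in a maximal `(k+2)`-quasiplanar convex geometric representation on
`n ≥ 2k+3` vertices, a vertex `v` of degree at most `2k+2` is adjacent exactly to the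
vertices `u` for which `{u, v}` is a `j`-pair for some `j ≤ k`, i.e. to the `k+1` nearest
vertices on each side of `v` in the cyclic order. -/
theorem stmt13 (k : ℕ) [NeZero n] (hn : 2 * k + 3 ≤ n) (E : SimpleGraph (ZMod n))
    (hq : QuasiPlanar (k + 2) E) (hmax : MaximalQP (k + 2) E) (v : ZMod n)
    (hd : (univ.filter fun u => E.Adj v u).card ≤ 2 * k + 2) :
    ∀ u : ZMod n, E.Adj v u ↔ (u ≠ v ∧ ((Arc v u).card ≤ k ∨ (Arc u v).card ≤ k)) := by
  have hshort_sub : (univ.filter fun u => u ≠ v ∧ (#(Arc v u) ≤ k ∨ #(Arc u v) ≤ k)) ⊆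
      univ.filter fun u => E.Adj v u := fun u hu => by
    simp only [mem_filter, mem_univ, true_and] at hu ⊢
    exact adj_of_card_arc_le hq hmax hu.1 hu.2
  have hshort_eq := eq_of_subset_of_card_le hshort_sub
    (by rw [card_filter_short_pair k hn v]; exact hd)
  intro u
  simpa using (Finset.ext_iff.mp hshort_eq u).symm
end

section
/- If a linear semi-bar 0-visibility representation R with distinct lengths on bars 1, …, n is curled into a cylindrical representation R′, then the visibility graphs of R and R′ coincide if and only if bars 1 and n (the bottom and top bars) are the two longest bars of R. -/
open Finset
open scoped Classical

variable {n : ℕ}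

/-- In a linear semi-bar representation (bars `0, …, n-1` from bottom to top), the number of
bars strictly between `i` and `j` that are longer than the shorter of the two. -/
noncomputable def btwCount (ℓ : Fin n → ℝ) (i j : Fin n) : ℕ :=
  (univ.filter fun t => min i j < t ∧ t < max i j ∧ min (ℓ i) (ℓ j) < ℓ t).card

/-- Linear semi-bar `k`-visibility adjacency. -/
noncomputable def LinAdj (k : ℕ) (ℓ : Fin n → ℝ) (i j : Fin n) : Prop :=
  i ≠ j ∧ btwCount ℓ i j ≤ k

/-- The open cyclic arc from `i` to `j` after curling bars `0, …, n-1` onto a cylinder. -/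
def cycArc (i j : Fin n) : Finset (Fin n) :=
  univ.filter fun t => if i < j then (i < t ∧ t < j) else (i < t ∨ t < j)

noncomputable def cycCount (ℓ : Fin n → ℝ) (i j : Fin n) : ℕ :=
  ((cycArc i j).filter fun t => min (ℓ i) (ℓ j) < ℓ t).card

/-- Cylindrical semi-bar `k`-visibility adjacency on the curled representation. -/
noncomputable def CylAdjF (k : ℕ) (ℓ : Fin n → ℝ) (i j : Fin n) : Prop :=
  i ≠ j ∧ (cycCount ℓ i j ≤ k ∨ cycCount ℓ j i ≤ k)

/-!
Curling never destroys a visibility: the inner arc between `i < j` is the linear interval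
between them. It can only create the pairs that see each other around the back of the cylinder,
through the wrap arc `{t | t < i ∨ j < t}`. The wrap arc from the top bar to the bottom bar is
empty, so these two always see each other on the cylinder; they see each other linearly iff every
other bar is shorter than both. Conversely, if the two end bars are the longest ones, the wrap arc
of any other pair `i < j` contains the bottom bar (when `i` is not the bottom) or the top bar (when
`j` is not the top), which is longer than `i`, resp. `j`, and blocks the view.
-/

section Visibility

variable {k : ℕ} {ℓ : Fin n → ℝ} {i j a b t : Fin n}

lemma btwCount_comm (ℓ : Fin n → ℝ) (i j : Fin n) : btwCount ℓ i j = btwCount ℓ j i := by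
  simp only [btwCount, min_comm i j, max_comm i j, min_comm (ℓ i) (ℓ j)]

lemma btwCount_eq_zero_iff_of_le (hij : i ≤ j) :
    btwCount ℓ i j = 0 ↔ ∀ t, i < t → t < j → ℓ t ≤ min (ℓ i) (ℓ j) := by
  simp [btwCount, min_eq_left hij, max_eq_right hij, filter_eq_empty_iff]

lemma cycCount_eq_zero_iff :
    cycCount ℓ i j = 0 ↔ ∀ t ∈ cycArc i j, ℓ t ≤ min (ℓ i) (ℓ j) := by
  simp [cycCount, filter_eq_empty_iff]

lemma mem_cycArc_of_gt (hij : i < j) : t ∈ cycArc j i ↔ t < i ∨ j < t := by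
  simp [cycArc, not_lt_of_gt hij, or_comm]

lemma cycArc_eq_empty (ha : IsBot a) (hb : IsTop b) : cycArc b a = ∅ := by
  ext t
  simp only [cycArc, mem_filter, mem_univ, true_and, notMem_empty, iff_false]
  split_ifs <;> simp [not_lt_of_ge (ha t), not_lt_of_ge (hb t)]

lemma cycCount_eq_btwCount (ℓ : Fin n → ℝ) (hij : i < j) : cycCount ℓ i j = btwCount ℓ i j := by
  simp only [cycCount, btwCount, cycArc, filter_filter, if_pos hij, min_eq_left hij.le,
    max_eq_right hij.le, and_assoc]

lemma linAdj_comm : LinAdj k ℓ i j ↔ LinAdj k ℓ j i := by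
  rw [LinAdj, LinAdj, btwCount_comm, ne_comm]

lemma cylAdjF_comm : CylAdjF k ℓ i j ↔ CylAdjF k ℓ j i := by
  rw [CylAdjF, CylAdjF, or_comm, ne_comm]

lemma LinAdj.cylAdjF (h : LinAdj k ℓ i j) : CylAdjF k ℓ i j := by
  wlog hij : i < j generalizing i j
  · exact cylAdjF_comm.2 <| this (linAdj_comm.1 h) <| lt_of_le_of_ne (not_lt.1 hij) h.1.symm
  exact ⟨h.1, Or.inl ((cycCount_eq_btwCount ℓ hij).trans_le h.2)⟩

lemma linAdj_zero_of_cylAdjF_zero (ha : IsBot a) (hb : IsTop b)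
    (hlong : ∀ t, t ≠ a → t ≠ b → ℓ t < ℓ a ∧ ℓ t < ℓ b) (h : CylAdjF 0 ℓ i j) :
    LinAdj 0 ℓ i j := by
  wlog hij : i < j generalizing i j
  · exact linAdj_comm.2 <| this (cylAdjF_comm.1 h) <| lt_of_le_of_ne (not_lt.1 hij) h.1.symm
  refine ⟨h.1, ?_⟩
  rcases h.2 with hinner | hwrap
  · rwa [← cycCount_eq_btwCount ℓ hij]
  have hblocked : ∀ t, t < i ∨ j < t → ℓ t ≤ min (ℓ j) (ℓ i) := fun t ht =>
    cycCount_eq_zero_iff.1 (Nat.le_zero.1 hwrap) t ((mem_cycArc_of_gt hij).2 ht)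
  have hib : i ≠ b := (hij.trans_le (hb j)).ne
  have hja : j ≠ a := (hij.trans_le' (ha i)).ne'
  obtain rfl : i = a := by
    by_contra hia
    have := hblocked a (Or.inl <| lt_of_le_of_ne (ha i) (Ne.symm hia))
    linarith [(hlong i hia hib).1, min_le_right (ℓ j) (ℓ i)]
  obtain rfl : j = b := by
    by_contra hjb
    have := hblocked b (Or.inr <| lt_of_le_of_ne (hb j) hjb)
    linarith [(hlong j hja hjb).2, min_le_left (ℓ j) (ℓ i)]
  refine Nat.le_zero.2 <| (btwCount_eq_zero_iff_of_le hij.le).2 fun t hat htb => ?_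
  have := hlong t hat.ne' htb.ne
  exact le_min this.1.le this.2.le

lemma lt_ends_of_cylAdjF_zero_imp_linAdj_zero (hinj : Function.Injective ℓ)
    (ha : IsBot a) (hb : IsTop b) (hab : a ≠ b) (h : CylAdjF 0 ℓ a b → LinAdj 0 ℓ a b)
    (hta : t ≠ a) (htb : t ≠ b) : ℓ t < ℓ a ∧ ℓ t < ℓ b := by
  have hwrap : cycCount ℓ b a = 0 :=
    cycCount_eq_zero_iff.2 fun t ht => by simp [cycArc_eq_empty ha hb] at ht
  have hlin := (h ⟨hab, Or.inr hwrap.le⟩).2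
  have hle := (btwCount_eq_zero_iff_of_le (ha b)).1 (Nat.le_zero.1 hlin) t
    (lt_of_le_of_ne (ha t) hta.symm) (lt_of_le_of_ne (hb t) htb)
  exact ⟨(hle.trans (min_le_left _ _)).lt_of_ne (hinj.ne hta),
    (hle.trans (min_le_right _ _)).lt_of_ne (hinj.ne htb)⟩

end Visibility

/-- curling a linear semi-bar `0`-visibility representation with distinct
lengths (`n ≥ 2`) into a cylinder preserves the visibility graph iff the bottom bar and the
top bar are the two longest bars. -/
theorem stmt18 (hn : 2 ≤ n) (ℓ : Fin n → ℝ) (hinj : Function.Injective ℓ) :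
    (∀ i j : Fin n, LinAdj 0 ℓ i j ↔ CylAdjF 0 ℓ i j) ↔
      (∀ t : Fin n, t ≠ ⟨0, by omega⟩ → t ≠ ⟨n - 1, by omega⟩ →
        ℓ t < ℓ ⟨0, by omega⟩ ∧ ℓ t < ℓ ⟨n - 1, by omega⟩) := by
  have hbot : IsBot (⟨0, by omega⟩ : Fin n) := fun t => Nat.zero_le t
  have htop : IsTop (⟨n - 1, by omega⟩ : Fin n) := fun t => Nat.le_sub_one_of_lt t.isLt
  have hne : (⟨0, by omega⟩ : Fin n) ≠ ⟨n - 1, by omega⟩ := Fin.ne_of_val_ne (by simp only; omega)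
  exact ⟨fun h t => lt_ends_of_cylAdjF_zero_imp_linAdj_zero hinj hbot htop hne (h _ _).2,
    fun hlong i j => ⟨LinAdj.cylAdjF, linAdj_zero_of_cylAdjF_zero hbot htop hlong⟩⟩
end
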